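/- arXiv:2010.09886 — 2 statements merged into one kernel-verified Lean document; each statement's English description precedes it below -/
import Mathlib

section
/- Let X ∼ Bin(n, p) with 0 < p ≤ 1/2, and let 0 < ε ≤ 1/2 satisfy ε²pn ≥ 3. Then P(X ≤ (1−ε)pn) ≥ exp(−9ε²pn) and P(X ≥ (1+ε)pn) ≥ exp(−9ε²pn). -/
/-!
Every binomial probability with `0 < k < n` is at least `exp (-(k - np)² / (np(1-p))) / (3√k)`:
Stirling's bounds give `C(n, k) ≥ nⁿ / (kᵏ (n-k)ⁿ⁻ᵏ) / (3√k)`, and `log x ≥ 1 - 1/x`, applied to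
both factors of `(np/k)ᵏ (n(1-p)/(n-k))ⁿ⁻ᵏ`, bounds this product below by the exponential of minus
the chi-square statistic. The window `[(1 - 3ε/2)pn, (1 - ε)pn]`, resp. `[(1 + ε)pn, (1 + 3ε/2)pn]`,
contains at least `εpn/3` integers, each of probability at least `exp (-9ε²pn/2) / (3√(2pn))`, and
`ε²pn ≥ 3` makes their total exceed `exp (-9ε²pn)`.
-/

open Real Finset Nat

lemma exp_one_sq_le_three_mul_sqrt_two_pi : exp 1 ^ 2 ≤ 3 * √(2 * π) := by
  have h : exp 1 ^ 2 / 3 ≤ √(2 * π) := by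
    have he : exp 1 ^ 2 < 7.39 := by nlinarith [exp_one_lt_d9, exp_pos 1]
    rw [Real.le_sqrt' (by positivity)]
    nlinarith [exp_pos 1, pi_gt_d2]
  linarith

lemma factorial_le_exp_one_mul_sqrt_mul_pow {n : ℕ} (hn : n ≠ 0) :
    (n ! : ℝ) ≤ exp 1 * √n * (n / exp 1) ^ n := by
  obtain ⟨m, rfl⟩ := exists_eq_succ_of_ne_zero hn
  have h : Stirling.stirlingSeq (m + 1) ≤ exp 1 / √2 := by
    simpa using Stirling.stirlingSeq'_antitone (Nat.zero_le m)
  rw [Stirling.stirlingSeq, div_le_iff₀ (by positivity)] at h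
  calc ((m + 1) ! : ℝ) ≤ exp 1 / √2 * (√(2 * (m + 1 : ℕ)) * ((m + 1 : ℕ) / exp 1) ^ (m + 1)) := h
    _ = exp 1 * √(m + 1 : ℕ) * ((m + 1 : ℕ) / exp 1) ^ (m + 1) := by
      rw [sqrt_mul zero_le_two]; field_simp

lemma pow_div_pow_mul_pow_div_le_choose {k j : ℕ} (hk : k ≠ 0) (hj : j ≠ 0) :
    ((k + j : ℝ) ^ (k + j) / (k ^ k * j ^ j)) / (3 * √k) ≤ (k + j).choose k := by
  have hconst : 1 / (3 * √k) ≤ √(2 * π * (k + j)) / (exp 1 ^ 2 * √k * √j) := by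
    rw [div_le_div_iff₀ (by positivity) (by positivity), one_mul]
    have : √(2 * π) * √j ≤ √(2 * π * (k + j)) := by
      rw [← sqrt_mul (by positivity)]; gcongr; linarith
    calc exp 1 ^ 2 * √k * √j ≤ 3 * √(2 * π) * √k * √j := by
          gcongr; exact exp_one_sq_le_three_mul_sqrt_two_pi
      _ ≤ √(2 * π * (k + j)) * (3 * √k) := by nlinarith [sqrt_nonneg (k : ℝ)]
  calc ((k + j : ℝ) ^ (k + j) / (k ^ k * j ^ j)) / (3 * √k)
      = 1 / (3 * √k) * ((k + j : ℝ) ^ (k + j) / (k ^ k * j ^ j)) := by ring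
    _ ≤ √(2 * π * (k + j)) / (exp 1 ^ 2 * √k * √j) * ((k + j : ℝ) ^ (k + j) / (k ^ k * j ^ j)) := by
      gcongr
    _ = √(2 * π * (k + j : ℕ)) * ((k + j : ℕ) / exp 1) ^ (k + j) /
          ((exp 1 * √k * (k / exp 1) ^ k) * (exp 1 * √j * (j / exp 1) ^ j)) := by
      push_cast; rw [div_pow, div_pow, div_pow]; field_simp; ring
    _ ≤ (k + j)! / (k ! * j !) := by
      gcongr
      · exact Stirling.le_factorial_stirling _
      · exact factorial_le_exp_one_mul_sqrt_mul_pow hk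
      · exact factorial_le_exp_one_mul_sqrt_mul_pow hj
    _ = (k + j).choose k := by
      rw [Nat.cast_choose ℝ (Nat.le_add_right k j), Nat.add_sub_cancel_left]

lemma exp_sub_sq_div_le_div_pow (k : ℕ) {y : ℝ} (hy : 0 < y) :
    exp (k - k ^ 2 / y) ≤ (y / k) ^ k := by
  rcases k.eq_zero_or_pos with rfl | hk
  · simp
  have hk' : (0 : ℝ) < k := by exact_mod_cast hk
  have hlog : 1 - k / y ≤ log (y / k) := by
    have := log_le_sub_one_of_pos (div_pos hk' hy)
    rw [← inv_div, log_inv, inv_div] at this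
    linarith
  calc exp (k - k ^ 2 / y) = exp (k * (1 - k / y)) := by ring_nf
    _ ≤ exp (k * log (y / k)) := by gcongr
    _ = (y / k) ^ k := by rw [exp_nat_mul, exp_log (by positivity)]

lemma exp_neg_sq_div_le_pow_mul_pow (k j : ℕ) {p : ℝ} (hp₀ : 0 < p) (hp₁ : p < 1)
    (hkj : k + j ≠ 0) :
    exp (-((k - (k + j) * p) ^ 2 / ((k + j) * p * (1 - p)))) ≤
      ((k + j) * p / k) ^ k * ((k + j) * (1 - p) / j) ^ j := by
  have hN : (0 : ℝ) < k + j := by exact_mod_cast Nat.pos_of_ne_zero hkj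
  have hq : 0 < 1 - p := by linarith
  calc exp (-((k - (k + j) * p) ^ 2 / ((k + j) * p * (1 - p))))
      = exp (k - k ^ 2 / ((k + j) * p)) * exp (j - j ^ 2 / ((k + j) * (1 - p))) := by
        rw [← exp_add]; congr 1; field_simp; ring
    _ ≤ _ := by
      gcongr
      · exact exp_sub_sq_div_le_div_pow k (by positivity)
      · exact exp_sub_sq_div_le_div_pow j (by positivity)

lemma exp_neg_sq_div_div_le_choose_mul_pow_mul_pow {n k : ℕ} (hk : k ≠ 0) (hkn : k < n)
    {p : ℝ} (hp₀ : 0 < p) (hp₁ : p < 1) :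
    exp (-((k - n * p) ^ 2 / (n * p * (1 - p)))) / (3 * √k) ≤
      n.choose k * p ^ k * (1 - p) ^ (n - k) := by
  obtain ⟨j, rfl⟩ := Nat.exists_eq_add_of_lt hkn
  have hj : j + 1 ≠ 0 := by omega
  rw [show k + j + 1 - k = j + 1 by omega, show k + j + 1 = k + (j + 1) by omega]
  push_cast
  calc exp (-((k - (k + (j + 1)) * p) ^ 2 / ((k + (j + 1)) * p * (1 - p)))) / (3 * √k)
      ≤ ((k + (j + 1)) * p / k) ^ k * ((k + (j + 1)) * (1 - p) / (j + 1 : ℕ)) ^ (j + 1)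
          / (3 * √k) := by
        gcongr
        exact_mod_cast exp_neg_sq_div_le_pow_mul_pow k (j + 1) hp₀ hp₁ (by omega)
    _ = ((k + (j + 1 : ℕ) : ℝ) ^ (k + (j + 1)) / (k ^ k * (j + 1 : ℕ) ^ (j + 1))) / (3 * √k)
          * (p ^ k * (1 - p) ^ (j + 1)) := by
        rw [div_pow, div_pow, mul_pow, mul_pow]; push_cast; field_simp; ring
    _ ≤ (k + (j + 1)).choose k * (p ^ k * (1 - p) ^ (j + 1)) := by
        gcongr
        exact pow_div_pow_mul_pow_div_le_choose hk hj
    _ = _ := by ring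

lemma card_mul_le_sum_choose_mul_pow_mul_pow {n a b : ℕ} (ha : a ≠ 0) (hb : b < n)
    {p : ℝ} (hp₀ : 0 < p) (hp₁ : p < 1) {D K : ℝ}
    (hD : ∀ k ∈ Icc a b, ((k : ℝ) - n * p) ^ 2 ≤ D) (hK : ∀ k ∈ Icc a b, (k : ℝ) ≤ K) :
    #(Icc a b) * (exp (-(D / (n * p * (1 - p)))) / (3 * √K)) ≤
      ∑ k ∈ Icc a b, n.choose k * p ^ k * (1 - p) ^ (n - k) := by
  rw [← nsmul_eq_mul]
  refine card_nsmul_le_sum _ _ _ fun k hk => ?_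
  obtain ⟨hak, hkb⟩ := mem_Icc.mp hk
  have hk0 : (0 : ℝ) < k := by exact_mod_cast (by omega : 0 < k)
  calc exp (-(D / (n * p * (1 - p)))) / (3 * √K)
      ≤ exp (-((k - n * p) ^ 2 / (n * p * (1 - p)))) / (3 * √k) := by
        gcongr
        · exact hD k hk
        · exact hK k hk
    _ ≤ _ := exp_neg_sq_div_div_le_choose_mul_pow_mul_pow (by omega) (by omega) hp₀ hp₁

lemma sub_sub_one_le_card_Icc_ceil_floor {A B : ℝ} (hA : 0 ≤ A) :
    B - A - 1 ≤ #(Icc ⌈A⌉₊ ⌊B⌋₊) := by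
  rw [Nat.card_Icc]
  have := Nat.sub_one_lt_floor B
  have := Nat.ceil_lt_add_one hA
  have : ((⌊B⌋₊ + 1 : ℕ) : ℝ) ≤ ((⌊B⌋₊ + 1 - ⌈A⌉₊ : ℕ) : ℝ) + ⌈A⌉₊ := by
    exact_mod_cast le_tsub_add
  push_cast at this
  linarith

lemma exp_neg_nine_mul_le {ε μ : ℝ} (hε : 0 < ε) (h3 : 3 ≤ ε ^ 2 * μ) :
    exp (-(9 * ε ^ 2 * μ)) ≤ ε * μ / 3 * (exp (-(9 / 2 * ε ^ 2 * μ)) / (3 * √(2 * μ))) := by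
  have hμ : 0 < μ := pos_of_mul_pos_right (by linarith) (sq_nonneg ε)
  set s := √(2 * μ)
  have hs : 0 < s := by positivity
  have hs2 : s ^ 2 = 2 * μ := sq_sqrt (by positivity)
  have hεs : 2 ≤ ε * s := by nlinarith [mul_pos hε hs]
  have hE : exp (-(9 / 2 * ε ^ 2 * μ)) ≤ 1 / 9 := by
    have := add_one_le_exp (9 / 2 * ε ^ 2 * μ)
    rw [exp_neg, inv_le_comm₀ (exp_pos _) (by norm_num)]
    nlinarith
  set E := exp (-(9 / 2 * ε ^ 2 * μ))
  calc exp (-(9 * ε ^ 2 * μ)) = E * E := by rw [← exp_add]; ring_nf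
    _ ≤ ε * s / 18 * E := by gcongr; linarith
    _ = ε * μ / 3 * (E / (3 * s)) := by field_simp; rw [hs2]; ring

lemma sum_Icc_le_sum_range_ite {f : ℕ → ℝ} (hf : ∀ k, 0 ≤ f k) {P : ℕ → Prop} [DecidablePred P]
    {a b n : ℕ} (hbn : b ≤ n) (hP : ∀ k ∈ Icc a b, P k) :
    ∑ k ∈ Icc a b, f k ≤ ∑ k ∈ range (n + 1), if P k then f k else 0 := by
  calc ∑ k ∈ Icc a b, f k = ∑ k ∈ Icc a b, if P k then f k else 0 :=
        sum_congr rfl fun k hk => (if_pos (hP k hk)).symm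
    _ ≤ _ := sum_le_sum_of_subset_of_nonneg
        (fun k hk => by simp only [mem_range, mem_Icc] at hk ⊢; omega)
        fun k _ _ => ite_nonneg (hf k) le_rfl

lemma exp_neg_le_sum_binomial_of_window {n : ℕ} {p ε : ℝ} (hp₀ : 0 < p) (hp : p ≤ 1 / 2)
    (hε₀ : 0 < ε) (hε : ε ≤ 1 / 2) (h3 : 3 ≤ ε ^ 2 * p * n) (P : ℝ → Prop) [DecidablePred P]
    {A : ℝ} (hA : 1 ≤ A) (hAn : A + ε * p * n / 2 < n)
    (hdev : ∀ x, A ≤ x → x ≤ A + ε * p * n / 2 → |x - p * n| ≤ 3 / 2 * ε * p * n)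
    (hP : ∀ x, A ≤ x → x ≤ A + ε * p * n / 2 → P x) :
    exp (-(9 * ε ^ 2 * p * n)) ≤
      ∑ k ∈ range (n + 1), if P k then (n.choose k : ℝ) * p ^ k * (1 - p) ^ (n - k) else 0 := by
  set B := A + ε * p * n / 2 with hB_def
  have hμ : 0 < p * n := pos_of_mul_pos_right (by nlinarith) (sq_nonneg ε)
  have hεμ : 6 ≤ ε * (p * n) := by nlinarith
  have hB : ⌊B⌋₊ < n := (Nat.floor_lt (by positivity)).mpr hAn
  have hwindow : ∀ k ∈ Icc ⌈A⌉₊ ⌊B⌋₊, A ≤ k ∧ (k : ℝ) ≤ B := fun k hk =>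
    ⟨Nat.ceil_le.mp (mem_Icc.mp hk).1, (Nat.le_floor_iff (by positivity)).mp (mem_Icc.mp hk).2⟩
  have hA₀ : ⌈A⌉₊ ≠ 0 := (Nat.ceil_pos.mpr (by linarith)).ne'
  have hsum := card_mul_le_sum_choose_mul_pow_mul_pow hA₀ hB hp₀ (by linarith)
    (D := (3 / 2 * ε * (p * n)) ^ 2) (K := 2 * (p * n))
    (fun k hk => by
      obtain ⟨h₁, h₂⟩ := hwindow k hk
      rw [mul_comm (n : ℝ), ← sq_abs]
      have := hdev k h₁ h₂
      gcongr
      linarith)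
    (fun k hk => by
      obtain ⟨h₁, h₂⟩ := hwindow k hk
      have := abs_le.mp (hdev k h₁ h₂)
      nlinarith)
  have hcard := sub_sub_one_le_card_Icc_ceil_floor (A := A) (B := B) (by linarith)
  have hexp : (3 / 2 * ε * (p * n)) ^ 2 / (n * p * (1 - p)) ≤ 9 / 2 * ε ^ 2 * (p * n) := by
    rw [div_le_iff₀ (by nlinarith), mul_comm (n : ℝ)]
    nlinarith
  calc exp (-(9 * ε ^ 2 * p * n)) = exp (-(9 * ε ^ 2 * (p * n))) := by ring_nf
    _ ≤ ε * (p * n) / 3 * (exp (-(9 / 2 * ε ^ 2 * (p * n))) / (3 * √(2 * (p * n)))) :=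
        exp_neg_nine_mul_le hε₀ (by linarith)
    _ ≤ #(Icc ⌈A⌉₊ ⌊B⌋₊) *
          (exp (-((3 / 2 * ε * (p * n)) ^ 2 / (n * p * (1 - p)))) / (3 * √(2 * (p * n)))) := by
        gcongr
        linarith [hB_def]
    _ ≤ ∑ k ∈ Icc ⌈A⌉₊ ⌊B⌋₊, (n.choose k : ℝ) * p ^ k * (1 - p) ^ (n - k) := hsum
    _ ≤ _ := sum_Icc_le_sum_range_ite
        (fun k => mul_nonneg (by positivity) (pow_nonneg (by linarith) _)) hB.le
        fun k hk => hP k (hwindow k hk).1 (hwindow k hk).2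

theorem stmt_14 (n : ℕ) (p ε : ℝ) (hp : 0 < p) (hp2 : p ≤ 1/2)
    (hε : 0 < ε) (hε2 : ε ≤ 1/2) (h3 : 3 ≤ ε^2 * p * n) :
    Real.exp (-(9 * ε^2 * p * n)) ≤
      ∑ k ∈ Finset.range (n+1),
        (if (k:ℝ) ≤ (1 - ε) * p * n then (n.choose k : ℝ) * p^k * (1-p)^(n-k) else 0)
    ∧ Real.exp (-(9 * ε^2 * p * n)) ≤
      ∑ k ∈ Finset.range (n+1),
        (if (1 + ε) * p * n ≤ (k:ℝ) then (n.choose k : ℝ) * p^k * (1-p)^(n-k) else 0) := by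
  have hμ : 12 ≤ p * n := by
    have : ε ^ 2 * (p * n) ≤ 1 / 4 * (p * n) := by gcongr; nlinarith
    linarith
  have hμn : p * n ≤ n / 2 := by nlinarith
  constructor
  · refine exp_neg_le_sum_binomial_of_window hp hp2 hε hε2 h3 (· ≤ (1 - ε) * p * n)
      (A := (1 - 3 / 2 * ε) * p * n)
      ?_ ?_ (fun x h₁ h₂ => abs_le.mpr ⟨?_, ?_⟩) (fun x _ h₂ => ?_) <;> nlinarith
  · refine exp_neg_le_sum_binomial_of_window hp hp2 hε hε2 h3 ((1 + ε) * p * n ≤ ·)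
      (A := (1 + ε) * p * n)
      ?_ ?_ (fun x h₁ h₂ => abs_le.mpr ⟨?_, ?_⟩) (fun x h₁ _ => ?_) <;> nlinarith
end

section
/- Let μ be the uniform distribution on a 6-point set {1,...,6} and let μ_n be the empirical measure of n i.i.d. samples from μ. Let X = n·μ_n({1}) and X' = n·μ_n({2}) (each marginally Bin(n, 1/6), jointly negatively associated). Then for n ≥ 324, P(X − X' > 2√n) ≥ e^{−243}. -/
/-!
Let `D = X - X'` be the difference of the counts of `0` and `1` among `n` uniform samples from
`Fin 6`, and tilt by `Z = exp (c D)` with `c = 15 / √n`. Its moments are explicit,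
`E Z = ((4 + 2 cosh c) / 6) ^ n`, and `6 (4 + 2 cosh 2c) ≤ (4 + 2 cosh c) ^ 2 cosh c` gives
`E Z² ≤ (E Z)² cosh c ^ n ≤ (E Z)² exp (n c² / 2)`. Since `E Z ≥ (1 + c² / 6) ^ n` is much
larger than `exp (2 c √n)`, at least half of `E Z` comes from the event `D > 2 √n`, and
Cauchy–Schwarz on that event (Paley–Zygmund) yields `P (D > 2 √n) ≥ exp (-n c² / 2) / 4`.
-/

open MeasureTheory ProbabilityTheory Real Finset

namespace Real

lemma one_add_sq_div_two_le_cosh (x : ℝ) : 1 + x ^ 2 / 2 ≤ cosh x := by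
  have h := sum_le_hasSum (range 2) (fun i _ => by rw [pow_mul]; positivity) (hasSum_cosh x)
  norm_num [sum_range_succ] at h
  linarith

lemma six_mul_four_add_two_cosh_two_mul_le (x : ℝ) :
    6 * (4 + 2 * cosh (2 * x)) ≤ (4 + 2 * cosh x) ^ 2 * cosh x := by
  have hC := one_le_cosh x
  have h2x : cosh (2 * x) = 2 * cosh x ^ 2 - 1 := by
    rw [cosh_two_mul, cosh_sq]; ring
  rw [h2x]
  -- the difference is `4 (C - 1) (C ^ 2 - C + 3)` with `C = cosh x ≥ 1`
  nlinarith [mul_nonneg (sub_nonneg.2 hC) (by nlinarith : (0 : ℝ) ≤ cosh x ^ 2 - cosh x + 3)]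

lemma exp_mul_div_one_add_le_one_add_pow {x : ℝ} (hx : 0 ≤ x) (n : ℕ) :
    exp (n * (x / (1 + x))) ≤ (1 + x) ^ n := by
  have hlog : x / (1 + x) ≤ log (1 + x) := by
    calc x / (1 + x) = 1 - (1 + x)⁻¹ := by field_simp; ring
      _ ≤ log (1 + x) := one_sub_inv_le_log_of_pos (by linarith)
  calc exp (n * (x / (1 + x))) ≤ exp (n * log (1 + x)) := by gcongr
    _ = (1 + x) ^ n := by rw [← log_pow, exp_log (by positivity)]

end Real

lemma sq_sum_le_four_mul_card_filter_mul_sum_sq {β : Type*} [Fintype β] {Z : β → ℝ}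
    (hZ : ∀ x, 0 ≤ Z x) (p : β → Prop) [DecidablePred p]
    (h : 2 * ∑ x with ¬p x, Z x ≤ ∑ x, Z x) :
    (∑ x, Z x) ^ 2 ≤ 4 * #{x | p x} * ∑ x, Z x ^ 2 := by
  have hsplit := sum_filter_add_sum_filter_not univ p Z
  have hhalf : ∑ x, Z x ≤ 2 * ∑ x with p x, Z x := by linarith
  have hsq : ∑ x with p x, Z x ^ 2 ≤ ∑ x, Z x ^ 2 :=
    sum_le_sum_of_subset_of_nonneg (filter_subset _ _) fun _ _ _ => sq_nonneg _
  calc (∑ x, Z x) ^ 2 ≤ (2 * ∑ x with p x, Z x) ^ 2 :=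
        pow_le_pow_left₀ (sum_nonneg fun x _ => hZ x) hhalf 2
    _ = 4 * (∑ x with p x, Z x) ^ 2 := by ring
    _ ≤ 4 * (#{x | p x} * ∑ x with p x, Z x ^ 2) := by gcongr; exact sq_sum_le_card_mul_sum_sq
    _ ≤ 4 * #{x | p x} * ∑ x, Z x ^ 2 := by rw [← mul_assoc]; gcongr

def countDiff {n : ℕ} (x : Fin n → Fin 6) : ℝ := #{i | x i = 0} - #{i | x i = 1}

section countDiff

variable {n : ℕ}

lemma countDiff_eq_sum (x : Fin n → Fin 6) :
    countDiff x = ∑ i, ((if x i = 0 then 1 else 0) - if x i = 1 then 1 else 0) := by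
  rw [countDiff, sum_sub_distrib, sum_boole, sum_boole]

lemma sum_exp_mul_countDiff (c : ℝ) :
    ∑ x : Fin n → Fin 6, exp (c * countDiff x) = (4 + 2 * cosh c) ^ n := by
  have hsix : ∑ v : Fin 6, exp (c * ((if v = 0 then 1 else 0) - if v = 1 then 1 else 0))
      = 4 + 2 * cosh c := by
    simp only [Fin.sum_univ_six, Fin.isValue, Fin.reduceEq, ↓reduceIte, zero_ne_one, one_ne_zero,
      sub_zero, zero_sub, sub_self, mul_one, mul_neg, mul_zero, exp_zero, cosh_eq]
    ring
  simp_rw [← hsix, sum_pow', Fintype.piFinset_univ, countDiff_eq_sum, mul_sum, exp_sum]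

lemma six_pow_mul_one_add_sq_div_six_pow_le_sum_exp (c : ℝ) :
    6 ^ n * (1 + c ^ 2 / 6) ^ n ≤ ∑ x : Fin n → Fin 6, exp (c * countDiff x) := by
  rw [sum_exp_mul_countDiff, ← mul_pow]
  gcongr
  linarith [one_add_sq_div_two_le_cosh c]

lemma six_pow_mul_sum_exp_two_mul_le (c : ℝ) :
    6 ^ n * ∑ x : Fin n → Fin 6, exp (2 * c * countDiff x)
      ≤ (∑ x : Fin n → Fin 6, exp (c * countDiff x)) ^ 2 * cosh c ^ n := by
  rw [sum_exp_mul_countDiff, sum_exp_mul_countDiff, ← pow_mul, pow_mul', ← mul_pow,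
    ← mul_pow]
  exact pow_le_pow_left₀ (by positivity) (six_mul_four_add_two_cosh_two_mul_le c) n

lemma sum_filter_le_exp_mul_countDiff_le {c : ℝ} (hc : 0 ≤ c) (t : ℝ) :
    ∑ x : Fin n → Fin 6 with countDiff x ≤ t, exp (c * countDiff x) ≤ 6 ^ n * exp (c * t) := by
  calc ∑ x : Fin n → Fin 6 with countDiff x ≤ t, exp (c * countDiff x)
      ≤ ∑ x : Fin n → Fin 6 with countDiff x ≤ t, exp (c * t) :=
        sum_le_sum fun x hx => by gcongr; exact (mem_filter.1 hx).2
    _ ≤ ∑ _x : Fin n → Fin 6, exp (c * t) :=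
        sum_le_sum_of_subset_of_nonneg (filter_subset _ _) fun _ _ _ => (exp_pos _).le
    _ = 6 ^ n * exp (c * t) := by simp

lemma six_pow_le_four_mul_cosh_pow_mul_card {c : ℝ} (hc : 0 ≤ c) {t : ℝ}
    (h : 2 * exp (c * t) ≤ (1 + c ^ 2 / 6) ^ n) :
    6 ^ n ≤ 4 * cosh c ^ n * #{x : Fin n → Fin 6 | t < countDiff x} := by
  set A := ∑ x : Fin n → Fin 6, exp (c * countDiff x)
  have hlow := six_pow_mul_one_add_sq_div_six_pow_le_sum_exp (n := n) c
  have htail : 2 * ∑ x : Fin n → Fin 6 with ¬t < countDiff x, exp (c * countDiff x) ≤ A := by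
    simp_rw [not_lt]
    nlinarith [sum_filter_le_exp_mul_countDiff_le (n := n) hc t,
      pow_pos (by norm_num : (0 : ℝ) < 6) n]
  have hPZ := sq_sum_le_four_mul_card_filter_mul_sum_sq (fun x => (exp_pos _).le)
    (fun x : Fin n → Fin 6 => t < countDiff x) htail
  have hsq : ∀ x : Fin n → Fin 6, exp (c * countDiff x) ^ 2 = exp (2 * c * countDiff x) := by
    intro x; rw [← exp_nat_mul]; ring_nf
  simp_rw [hsq] at hPZ
  have hA : 0 < A := sum_pos (fun x _ => exp_pos _) univ_nonempty
  have hA2 : 6 ^ n * A ^ 2 ≤ 4 * cosh c ^ n * #{x : Fin n → Fin 6 | t < countDiff x} * A ^ 2 :=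
    calc 6 ^ n * A ^ 2
        ≤ 6 ^ n * (4 * #{x : Fin n → Fin 6 | t < countDiff x}
            * ∑ x : Fin n → Fin 6, exp (2 * c * countDiff x)) := by gcongr
      _ = 4 * #{x : Fin n → Fin 6 | t < countDiff x}
            * (6 ^ n * ∑ x : Fin n → Fin 6, exp (2 * c * countDiff x)) := by ring
      _ ≤ 4 * #{x : Fin n → Fin 6 | t < countDiff x} * (A ^ 2 * cosh c ^ n) :=
          mul_le_mul_of_nonneg_left (six_pow_mul_sum_exp_two_mul_le c) (by positivity)
      _ = 4 * cosh c ^ n * #{x : Fin n → Fin 6 | t < countDiff x} * A ^ 2 := by ring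
  exact le_of_mul_le_mul_right hA2 (by positivity)

lemma exp_neg_mul_six_pow_le_card {n : ℕ} (hn : 324 ≤ n) :
    exp (-243) * 6 ^ n ≤ #{x : Fin n → Fin 6 | 2 * √n < countDiff x} := by
  have hn' : (324 : ℝ) ≤ n := by exact_mod_cast hn
  have hsqrt : √n ^ 2 = n := sq_sqrt (by positivity)
  set c := 15 / √n
  have hc2 : c ^ 2 = 225 / n := by rw [div_pow, hsqrt]; norm_num
  have hct : c * (2 * √n) = 30 := by simp only [c]; field_simp; norm_num
  have hgrowth : 2 * exp (c * (2 * √n)) ≤ (1 + c ^ 2 / 6) ^ n := by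
    have htwo : 2 * exp 30 ≤ exp 31 := by
      rw [show (31 : ℝ) = 1 + 30 by norm_num, exp_add]
      gcongr
      linarith [add_one_le_exp 1]
    have h31 : 31 ≤ (n : ℝ) * ((c ^ 2 / 6) / (1 + c ^ 2 / 6)) := by
      rw [hc2]; field_simp; nlinarith
    calc 2 * exp (c * (2 * √n)) ≤ exp 31 := hct ▸ htwo
      _ ≤ exp (n * ((c ^ 2 / 6) / (1 + c ^ 2 / 6))) := exp_le_exp.2 h31
      _ ≤ (1 + c ^ 2 / 6) ^ n := exp_mul_div_one_add_le_one_add_pow (by positivity) n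
  have hcosh : cosh c ^ n ≤ exp (225 / 2) := by
    calc cosh c ^ n ≤ exp (c ^ 2 / 2) ^ n :=
          pow_le_pow_left₀ (cosh_pos c).le (cosh_le_exp_half_sq c) n
      _ = exp (225 / 2) := by rw [← exp_nat_mul, hc2]; field_simp
  have hfour : 4 * exp (225 / 2) ≤ exp 243 := by
    rw [show (243 : ℝ) = 261 / 2 + 225 / 2 by norm_num, exp_add]
    gcongr
    linarith [add_one_le_exp (261 / 2)]
  calc exp (-243) * 6 ^ n
      ≤ exp (-243) * (4 * cosh c ^ n * #{x : Fin n → Fin 6 | 2 * √n < countDiff x}) := by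
        gcongr; exact six_pow_le_four_mul_cosh_pow_mul_card (by positivity) hgrowth
    _ ≤ exp (-243) * (exp 243 * #{x : Fin n → Fin 6 | 2 * √n < countDiff x}) := by
        gcongr; exact (mul_le_mul_of_nonneg_left hcosh (by norm_num)).trans hfour
    _ = #{x : Fin n → Fin 6 | 2 * √n < countDiff x} := by
        rw [← mul_assoc, ← exp_add]; simp

end countDiff

lemma measure_tuple_mem_eq_card_mul_pow {Ω ι α : Type*} [MeasurableSpace Ω] {P : Measure Ω}
    [IsProbabilityMeasure P] [Fintype ι] [MeasurableSpace α] [MeasurableSingletonClass α]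
    {Y : ι → Ω → α} (hmeas : ∀ i, Measurable (Y i)) (hindep : iIndepFun Y P)
    {q : ENNReal} (hq : ∀ i a, P {ω | Y i ω = a} = q) (s : Finset (ι → α)) :
    P {ω | (fun i => Y i ω) ∈ s} = #s * q ^ Fintype.card ι := by
  have hlaw := (iIndepFun_iff_map_fun_eq_pi_map fun i => (hmeas i).aemeasurable).1 hindep
  calc P {ω | (fun i => Y i ω) ∈ s} = P.map (fun ω i => Y i ω) s := by
        rw [Measure.map_apply (measurable_pi_lambda _ hmeas) s.measurableSet]; rfl
    _ = ∑ x ∈ s, Measure.pi (fun i => P.map (Y i)) {x} := by rw [hlaw, sum_measure_singleton]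
    _ = #s * q ^ Fintype.card ι := by
        simp [Measure.map_apply (hmeas _) (measurableSet_singleton _), Set.preimage, hq]

theorem stmt_15 {Ω : Type*} [MeasurableSpace Ω] (P : Measure Ω) [IsProbabilityMeasure P]
    (n : ℕ) (hn : 324 ≤ n) (Y : Fin n → Ω → Fin 6)
    (hmeas : ∀ i, Measurable (Y i))
    (hindep : iIndepFun Y P)
    (hunif : ∀ i, ∀ a : Fin 6, P {ω | Y i ω = a} = 1/6) :
    ENNReal.ofReal (Real.exp (-243)) ≤
      P {ω | 2 * Real.sqrt n <
        ((Finset.univ.filter (fun i => Y i ω = 0)).card : ℝ)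
          - ((Finset.univ.filter (fun i => Y i ω = 1)).card : ℝ)} := by
  set s : Finset (Fin n → Fin 6) := {x | 2 * √n < countDiff x}
  have hevent : {ω | 2 * √n < ((Finset.univ.filter (fun i => Y i ω = 0)).card : ℝ)
      - ((Finset.univ.filter (fun i => Y i ω = 1)).card : ℝ)}
      = {ω | (fun i => Y i ω) ∈ s} := by
    ext ω
    simp only [s, Set.mem_ofPred_eq]
    rw [mem_filter_univ]
    rfl
  have hcount : exp (-243) ≤ #s * (1 / 6) ^ n := by
    rw [div_pow, one_pow, mul_one_div, le_div_iff₀ (by positivity)]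
    exact exp_neg_mul_six_pow_le_card hn
  rw [hevent, measure_tuple_mem_eq_card_mul_pow hmeas hindep hunif, Fintype.card_fin]
  calc ENNReal.ofReal (exp (-243)) ≤ ENNReal.ofReal (#s * (1 / 6) ^ n) :=
        ENNReal.ofReal_le_ofReal hcount
    _ = #s * (1 / 6) ^ n := by
        rw [ENNReal.ofReal_mul (by positivity), ENNReal.ofReal_pow (by norm_num),
          ENNReal.ofReal_natCast, one_div, ENNReal.ofReal_inv_of_pos (by norm_num), one_div]
        norm_num
end
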